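/- Transversality lemma for H^1, first case: let R ≥ 1, (z,t), (ζ,τ) ∈ H^1 = R²×R distinct with Euclidean norms ≤ R and |z−ζ| ≥ |t−τ|/(2R), and let δ ∈ (0,1). Then the set {θ ∈ [0,π) : |π_{V_θ⊥}(z) − π_{V_θ⊥}(ζ)| < δ} is contained in at most 2 intervals, each of length at most C(R) · δ / d_E((z,t),(ζ,τ)), for an absolute constant C(R). -/

import Mathlib

noncomputable section

abbrev E2 := EuclideanSpace ℝ (Fin 2)

/-- the standard symplectic form on `ℝ²`: `ω(z,w) = x v − y u` -/
def symp2 (z w : E2) : ℝ := z 0 * w 1 - z 1 * w 0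

/-- the unit vector at angle `θ` -/
def vθ (θ : ℝ) : E2 := !₂[Real.cos θ, Real.sin θ]

/-- the line in `ℝ²` at angle `θ` -/
def Vθ (θ : ℝ) : Submodule ℝ E2 := Submodule.span ℝ {vθ θ}

/-- Euclidean orthogonal projection onto a subspace, as a map `ℝ² → ℝ²` -/
def projV (V : Submodule ℝ E2) (z : E2) : E2 := (V.orthogonalProjectionOnto z : E2)

/-- Euclidean distance on `H¹ = ℝ² × ℝ` -/
def dE (p q : E2 × ℝ) : ℝ := Real.sqrt (‖p.1 - q.1‖ ^ 2 + (p.2 - q.2) ^ 2)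

/-!
Writing `z - ζ = ρ (cos φ, sin φ)`, the projection of `z - ζ` to `V_θ⊥` has length
`ρ |sin (θ - φ)|`. By Jordan's inequality `|sin x|` bounds the distance from `x` to `πℤ`
(up to the factor `π / 2`), so every `θ` in the set lies within `π δ / (2ρ)` of `φ + πℤ`, and
only two points of `φ + πℤ` can be relevant for `θ ∈ [0, π)`. Finally the slope condition gives
`d_E ≤ (1 + 2R) ρ`.
-/

open Real

open Set

namespace Real

theorem abs_sub_round_div_pi_mul_pi_le (x : ℝ) : |x - round (x / π) * π| ≤ π / 2 := by
  have h := abs_sub_round (x / π)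
  rw [show x - round (x / π) * π = (x / π - round (x / π)) * π by field_simp, abs_mul,
    abs_of_pos pi_pos]
  nlinarith [pi_pos]

theorem abs_sub_round_div_pi_mul_pi_le_abs_sin (x : ℝ) :
    |x - round (x / π) * π| ≤ π / 2 * |sin x| := by
  have jordan := mul_abs_le_abs_sin (abs_sub_round_div_pi_mul_pi_le x)
  rw [sin_sub_int_mul_pi, abs_mul, abs_neg_one_zpow, one_mul] at jordan
  calc |x - round (x / π) * π| = π / 2 * (2 / π * |x - round (x / π) * π|) := by
        field_simp
    _ ≤ π / 2 * |sin x| := by gcongr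

end Real

theorem mem_Icc_union_Icc_of_abs_sub_int_mul_pi_lt {θ c L : ℝ} {j : ℤ} (hθ : θ ∈ Ico 0 π)
    (hc : |c| ≤ π / 2) (h : |θ - c - j * π| < L) :
    θ ∈ Icc (c - L) (c + L) ∪ Icc (c + π - L) (c + π + L) := by
  obtain ⟨hθ₀, hθπ⟩ := hθ
  rw [abs_le] at hc
  rw [abs_lt] at h
  -- `j ∉ {0, 1}` forces `L > π / 2`, and then the two intervals already cover `[0, π)`.
  have cover (hL : π / 2 < L) : θ ∈ Icc (c - L) (c + L) ∪ Icc (c + π - L) (c + π + L) := by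
    rcases le_or_gt θ (c + L) with h' | h'
    · exact Or.inl ⟨by linarith, h'⟩
    · exact Or.inr ⟨by linarith, by linarith⟩
  rcases (by omega : j ≤ -1 ∨ j = 0 ∨ j = 1 ∨ 2 ≤ j) with hj | rfl | rfl | hj
  · have : (j : ℝ) * π ≤ -π := by nlinarith [pi_pos, (by exact_mod_cast hj : (j : ℝ) ≤ -1)]
    exact cover (by linarith)
  · exact Or.inl ⟨by push_cast at h; linarith, by push_cast at h; linarith⟩
  · exact Or.inr ⟨by push_cast at h; linarith, by push_cast at h; linarith⟩
  · have : 2 * π ≤ (j : ℝ) * π := by nlinarith [pi_pos, (by exact_mod_cast hj : (2 : ℝ) ≤ j)]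
    exact cover (by linarith)

theorem exists_subset_Icc_union_Icc_of_abs_sin_lt (φ ε : ℝ) :
    ∃ c, {θ | θ ∈ Ico 0 π ∧ |sin (θ - φ)| < ε} ⊆
      Icc (c - π / 2 * ε) (c + π / 2 * ε) ∪ Icc (c + π - π / 2 * ε) (c + π + π / 2 * ε) := by
  refine ⟨φ - round (φ / π) * π, fun θ ⟨hθ, hsin⟩ => ?_⟩
  refine mem_Icc_union_Icc_of_abs_sub_int_mul_pi_lt (j := round ((θ - φ) / π) + round (φ / π))
    hθ (abs_sub_round_div_pi_mul_pi_le φ) ?_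
  calc |θ - (φ - round (φ / π) * π) - ((round ((θ - φ) / π) + round (φ / π) : ℤ) : ℝ) * π|
      = |θ - φ - round ((θ - φ) / π) * π| := by push_cast; ring_nf
    _ ≤ π / 2 * |sin (θ - φ)| := abs_sub_round_div_pi_mul_pi_le_abs_sin _
    _ < π / 2 * ε := by gcongr

theorem projV_sub (V : Submodule ℝ E2) (z ζ : E2) :
    projV V (z - ζ) = projV V z - projV V ζ := by
  simp only [projV, map_sub, Submodule.coe_sub]

theorem norm_vθ (θ : ℝ) : ‖vθ θ‖ = 1 := by
  simp [EuclideanSpace.norm_eq, vθ, Fin.sum_univ_two]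

theorem norm_projV_orthogonal_Vθ (θ : ℝ) (w : E2) :
    ‖projV (Vθ θ)ᗮ w‖ = |symp2 w (vθ θ)| := by
  have hproj : projV (Vθ θ)ᗮ w = w - inner ℝ (vθ θ) w • vθ θ := by
    rw [projV, Submodule.orthogonalProjectionOnto_orthogonal]
    exact congrArg (w - ·) (Submodule.starProjection_unit_singleton ℝ (norm_vθ θ) w)
  have hinner : inner ℝ (vθ θ) w = cos θ * w 0 + sin θ * w 1 := by
    simp [vθ, PiLp.inner_apply, Fin.sum_univ_two, mul_comm]
  have hsq : (w 0 - (cos θ * w 0 + sin θ * w 1) * cos θ) ^ 2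
      + (w 1 - (cos θ * w 0 + sin θ * w 1) * sin θ) ^ 2 = symp2 w (vθ θ) ^ 2 := by
    simp only [symp2, vθ, PiLp.toLp_apply, Matrix.cons_val_zero, Matrix.cons_val_one,
      Matrix.cons_val_fin_one]
    linear_combination ((cos θ * w 0 + sin θ * w 1) ^ 2 - w 0 ^ 2 - w 1 ^ 2) * sin_sq_add_cos_sq θ
  rw [hproj, hinner, EuclideanSpace.norm_eq, ← sqrt_sq_eq_abs, ← hsq]
  simp [Fin.sum_univ_two, vθ]

theorem exists_symp2_vθ_eq_norm_mul_sin (w : E2) :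
    ∃ φ, ∀ θ, symp2 w (vθ θ) = ‖w‖ * sin (θ - φ) := by
  set c : ℂ := Complex.orthonormalBasisOneI.repr.symm w
  have hc : ‖c‖ = ‖w‖ := LinearIsometryEquiv.norm_map _ _
  refine ⟨c.arg, fun θ => ?_⟩
  have h0 : w 0 = ‖w‖ * cos c.arg := by rw [← hc, Complex.norm_mul_cos_arg]; simp [c]
  have h1 : w 1 = ‖w‖ * sin c.arg := by rw [← hc, Complex.norm_mul_sin_arg]; simp [c]
  simp only [symp2, vθ, h0, h1, sin_sub, PiLp.toLp_apply, Matrix.cons_val_zero,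
    Matrix.cons_val_one, Matrix.cons_val_fin_one]
  ring

theorem norm_fst_sub_le_dE (p q : E2 × ℝ) : ‖p.1 - q.1‖ ≤ dE p q :=
  le_sqrt_of_sq_le (le_add_of_nonneg_right (sq_nonneg _))

theorem dE_le_norm_fst_sub_add_abs_snd_sub (p q : E2 × ℝ) :
    dE p q ≤ ‖p.1 - q.1‖ + |p.2 - q.2| := by
  rw [dE, ← sq_abs (p.2 - q.2)]
  exact sqrt_le_iff.2
    ⟨by positivity, by nlinarith [norm_nonneg (p.1 - q.1), abs_nonneg (p.2 - q.2)]⟩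

/-- (Transversality, first case.)  Let `R ≥ 1`.  There is a constant
`C = C(R) > 0` such that for all distinct `(z,t), (ζ,τ) ∈ H¹` of Euclidean norm at most `R`
with `|z−ζ| ≥ |t−τ|/(2R)`, and all `δ ∈ (0,1)`, the set
`{θ ∈ [0,π) : |π_{V_θ⊥}(z) − π_{V_θ⊥}(ζ)| < δ}` lies in at most 2 intervals, each of
length at most `C δ / d_E((z,t),(ζ,τ))`. -/
theorem transversality_first_case (R : ℝ) (hR : 1 ≤ R) :
    ∃ C : ℝ, 0 < C ∧
      ∀ (z ζ : E2) (t τ : ℝ) (δ : ℝ), ((z, t) : E2 × ℝ) ≠ (ζ, τ) →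
        dE (z, t) 0 ≤ R → dE (ζ, τ) 0 ≤ R → |t - τ| / (2 * R) ≤ ‖z - ζ‖ →
        0 < δ → δ < 1 →
        ∃ a₁ b₁ a₂ b₂ : ℝ,
          b₁ - a₁ ≤ C * δ / dE (z, t) (ζ, τ) ∧
          b₂ - a₂ ≤ C * δ / dE (z, t) (ζ, τ) ∧
          {θ : ℝ | θ ∈ Set.Ico 0 π ∧ ‖projV (Vθ θ)ᗮ z - projV (Vθ θ)ᗮ ζ‖ < δ} ⊆
            Set.Icc a₁ b₁ ∪ Set.Icc a₂ b₂ := by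
  refine ⟨π * (1 + 2 * R), by positivity, fun z ζ t τ δ hne _ _ hslope hδ _ => ?_⟩
  rw [div_le_iff₀ (by positivity)] at hslope
  have hρ : 0 < ‖z - ζ‖ := by
    refine norm_pos_iff.2 (sub_ne_zero.2 fun hzζ => hne ?_)
    have : |t - τ| ≤ 0 := by simpa [hzζ] using hslope
    rw [hzζ, sub_eq_zero.1 (abs_nonpos_iff.1 this)]
  have hdE : dE (z, t) (ζ, τ) ≤ (1 + 2 * R) * ‖z - ζ‖ := by
    linarith [dE_le_norm_fst_sub_add_abs_snd_sub (z, t) (ζ, τ)]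
  have hdE_pos : 0 < dE (z, t) (ζ, τ) := hρ.trans_le (norm_fst_sub_le_dE (z, t) (ζ, τ))
  have hwidth : 2 * (π / 2 * (δ / ‖z - ζ‖)) ≤ π * (1 + 2 * R) * δ / dE (z, t) (ζ, τ) := by
    calc 2 * (π / 2 * (δ / ‖z - ζ‖)) = π * (1 + 2 * R) * δ / ((1 + 2 * R) * ‖z - ζ‖) := by
          field_simp
      _ ≤ π * (1 + 2 * R) * δ / dE (z, t) (ζ, τ) := by gcongr
  obtain ⟨φ, hφ⟩ := exists_symp2_vθ_eq_norm_mul_sin (z - ζ)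
  obtain ⟨c, hc⟩ := exists_subset_Icc_union_Icc_of_abs_sin_lt φ (δ / ‖z - ζ‖)
  refine ⟨_, _, _, _, by linarith, by linarith, fun θ ⟨hθ, hlt⟩ => hc ⟨hθ, ?_⟩⟩
  rw [← projV_sub, norm_projV_orthogonal_Vθ, hφ, abs_mul, abs_norm] at hlt
  rwa [lt_div_iff₀ hρ, mul_comm]
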